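/- arXiv:1501.05477 — 2 statements merged into one kernel-verified Lean document; each statement's English description precedes it below -/
import Mathlib

section
/- Define τ_m : (ZMod 2)^{2m} → ZMod 2 recursively: τ_1(00)=0, τ_1(01)=0, τ_1(10)=1, τ_1(11)=0; and for m>1, τ_m(00⊙i)=τ_{m-1}(i), τ_m(01⊙i)=σ_{m-1}(i), τ_m(10⊙i)=σ_{m-1}(i)+1, τ_m(11⊙i)=τ_{m-1}(i), where σ_k(i) is the parity of the number of 01 bit-pairs in i. Then τ_m is a bent function for every m ≥ 1. -/
/-!
Split the Walsh sum at the leading bit-pair `x = b₀b₁y`. The four restrictions of `σ_{m+1}` are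
`σ_m, σ_m + 1, σ_m, σ_m` and those of `τ_{m+1}` are `τ_m, σ_m, σ_m + 1, τ_m`, so with `χ z = (-1)^z`
and `a = a₀a₁a'`
  `Wσ_{m+1}(a) = (1 + χ a₀ - χ a₁ + χ a₀ χ a₁) Wσ_m(a')`,
  `Wτ_{m+1}(a) = (1 + χ a₀ χ a₁) Wτ_m(a') + (χ a₁ - χ a₀) Wσ_m(a')`.
In the first the coefficient is `±2`; in the second exactly one coefficient is nonzero, and it
is `±2`. Induction on `m`, first for `σ` and then for `τ`, gives `|W| = 2^m`.
-/

/-- The sign-of-square function `σ_m` on bit strings: the parity of the number of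
bit-pairs equal to `01`. -/
def sigma (m : ℕ) (i : Fin (2 * m) → ZMod 2) : ZMod 2 :=
  ∑ j : Fin m,
    if i ⟨2 * j.1, by have := j.2; omega⟩ = 0 ∧ i ⟨2 * j.1 + 1, by have := j.2; omega⟩ = 1
    then 1 else 0

/-- The tail of a bit string after removing its leading bit-pair. -/
def tail2 (m : ℕ) (i : Fin (2 * (m + 1)) → ZMod 2) (j : Fin (2 * m)) : ZMod 2 :=
  i ⟨j.1 + 2, by have := j.2; omega⟩

/-- The non-diagonal-symmetry function `τ_m`, defined recursively:
`τ_m(00⊙i) = τ_{m-1}(i)`, `τ_m(01⊙i) = σ_{m-1}(i)`, `τ_m(10⊙i) = σ_{m-1}(i) + 1`,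
`τ_m(11⊙i) = τ_{m-1}(i)`; in particular `τ_1(10) = 1` and `τ_1 = 0` otherwise. -/
def tau : (m : ℕ) → (Fin (2 * m) → ZMod 2) → ZMod 2
  | 0, _ => 0
  | m + 1, i =>
    if i ⟨0, by omega⟩ = 0 ∧ i ⟨1, by omega⟩ = 0 then tau m (tail2 m i)
    else if i ⟨0, by omega⟩ = 0 ∧ i ⟨1, by omega⟩ = 1 then sigma m (tail2 m i)
    else if i ⟨0, by omega⟩ = 1 ∧ i ⟨1, by omega⟩ = 0 then sigma m (tail2 m i) + 1
    else tau m (tail2 m i)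

/-- Standard dot product on `(ZMod 2)^n`. -/
def dotp (n : ℕ) (a x : Fin n → ZMod 2) : ZMod 2 := ∑ j, a j * x j

def chi (z : ZMod 2) : ℤ := (-1) ^ z.val

def walsh (n : ℕ) (f : (Fin n → ZMod 2) → ZMod 2) (a : Fin n → ZMod 2) : ℤ :=
  ∑ x, chi (f x + dotp n a x)

lemma chi_add (u v : ZMod 2) : chi (u + v) = chi u * chi v := by
  revert u v; decide

lemma chi_zero : chi 0 = 1 := rfl

lemma chi_one : chi 1 = -1 := rfl

lemma zmod_two_eq_zero_or_one (u : ZMod 2) : u = 0 ∨ u = 1 := by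
  revert u; decide

lemma sum_zmod_two {M : Type*} [AddCommMonoid M] (g : ZMod 2 → M) : ∑ b, g b = g 0 + g 1 :=
  Fin.sum_univ_two g

lemma dotp_cons (n : ℕ) (a : Fin (n + 1) → ZMod 2) (b : ZMod 2) (y : Fin n → ZMod 2) :
    dotp (n + 1) a (Fin.cons b y) = a 0 * b + dotp n (Fin.tail a) y := by
  simp [dotp, Fin.sum_univ_succ, Fin.tail]

lemma walsh_succ (n : ℕ) (f : (Fin (n + 1) → ZMod 2) → ZMod 2) (a : Fin (n + 1) → ZMod 2) :
    walsh (n + 1) f a = ∑ b, chi (a 0 * b) * walsh n (fun y => f (Fin.cons b y)) (Fin.tail a) := by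
  rw [walsh, ← (Fin.consEquiv fun _ => ZMod 2).sum_comp, Fintype.sum_prod_type]
  refine Finset.sum_congr rfl fun b _ => ?_
  rw [walsh, Finset.mul_sum]
  refine Finset.sum_congr rfl fun y _ => ?_
  change chi (f (Fin.cons b y) + dotp (n + 1) a (Fin.cons b y)) = _
  rw [dotp_cons, add_left_comm, chi_add]

lemma walsh_add_one (n : ℕ) (f : (Fin n → ZMod 2) → ZMod 2) (a : Fin n → ZMod 2) :
    walsh n (fun x => f x + 1) a = -walsh n f a := by
  rw [walsh, walsh, ← Finset.sum_neg_distrib]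
  refine Finset.sum_congr rfl fun x _ => ?_
  rw [add_right_comm, chi_add, chi_one, mul_neg_one]

lemma walsh_zero (f : (Fin 0 → ZMod 2) → ZMod 2) (a : Fin 0 → ZMod 2) :
    walsh 0 f a = chi (f Fin.elim0) := by
  simp [walsh, dotp, Subsingleton.elim _ (Fin.elim0 : Fin 0 → ZMod 2)]

lemma sigma_cons_cons (m : ℕ) (b0 b1 : ZMod 2) (y : Fin (2 * m) → ZMod 2) :
    sigma (m + 1) (Fin.cons b0 (Fin.cons b1 y) : Fin (2 * m + 2) → ZMod 2)
      = sigma m y + if b0 = 0 ∧ b1 = 1 then 1 else 0 := by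
  rw [sigma, Fin.sum_univ_succ, add_comm]
  rfl

lemma tau_cons_cons (m : ℕ) (b0 b1 : ZMod 2) (y : Fin (2 * m) → ZMod 2) :
    tau (m + 1) (Fin.cons b0 (Fin.cons b1 y) : Fin (2 * m + 2) → ZMod 2)
      = if b0 = 0 ∧ b1 = 0 then tau m y
        else if b0 = 0 ∧ b1 = 1 then sigma m y
        else if b0 = 1 ∧ b1 = 0 then sigma m y + 1
        else tau m y := rfl

lemma walsh_sigma_succ (m : ℕ) (a : Fin (2 * m + 2) → ZMod 2) :
    walsh (2 * m + 2) (sigma (m + 1)) a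
      = (1 + chi (a 0) - chi (a 1) + chi (a 0) * chi (a 1))
        * walsh (2 * m) (sigma m) (Fin.tail (Fin.tail a)) := by
  simp only [walsh_succ, sum_zmod_two, sigma_cons_cons, Fin.tail, Fin.succ_zero_eq_one, mul_zero,
    mul_one, chi_zero, one_ne_zero, zero_ne_one, and_true, and_false, if_true, if_false,
    add_zero, walsh_add_one]
  ring

lemma walsh_tau_succ (m : ℕ) (a : Fin (2 * m + 2) → ZMod 2) :
    walsh (2 * m + 2) (tau (m + 1)) a
      = (1 + chi (a 0) * chi (a 1)) * walsh (2 * m) (tau m) (Fin.tail (Fin.tail a))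
        + (chi (a 1) - chi (a 0)) * walsh (2 * m) (sigma m) (Fin.tail (Fin.tail a)) := by
  simp only [walsh_succ, sum_zmod_two, tau_cons_cons, Fin.tail, Fin.succ_zero_eq_one, mul_zero,
    mul_one, chi_zero, one_ne_zero, zero_ne_one, and_true, and_false, if_true, if_false,
    walsh_add_one]
  ring

def IsBent (m : ℕ) (f : (Fin (2 * m) → ZMod 2) → ZMod 2) : Prop :=
  ∀ a, |walsh (2 * m) f a| = 2 ^ m

lemma isBent_zero (f : (Fin (2 * 0) → ZMod 2) → ZMod 2) (hf : ∀ x, f x = 0) : IsBent 0 f := by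
  intro a
  change |walsh 0 f a| = 1
  rw [walsh_zero, hf, chi_zero, abs_one]

lemma isBent_sigma (m : ℕ) : IsBent m (sigma m) := by
  induction m with
  | zero => exact isBent_zero _ fun x => Finset.sum_empty
  | succ m ih =>
    intro a
    change |walsh (2 * m + 2) (sigma (m + 1)) a| = _
    rw [walsh_sigma_succ, abs_mul, ih, pow_succ, mul_comm]
    congr 1
    generalize a 0 = u
    generalize a 1 = v
    revert u v
    decide

lemma isBent_tau (m : ℕ) : IsBent m (tau m) := by
  induction m with
  | zero => exact isBent_zero _ fun x => rfl
  | succ m ih =>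
    intro a
    change |walsh (2 * m + 2) (tau (m + 1)) a| = _
    rw [walsh_tau_succ]
    generalize a 0 = u
    generalize a 1 = v
    rcases zmod_two_eq_zero_or_one u with rfl | rfl <;>
      rcases zmod_two_eq_zero_or_one v with rfl | rfl <;>
      norm_num [chi_zero, chi_one, abs_mul, ih _, isBent_sigma m _, pow_succ']

theorem tau_isBent_general (m : ℕ) (a : Fin (2 * m) → ZMod 2) :
    |∑ x : Fin (2 * m) → ZMod 2, (-1 : ℤ) ^ (tau m x + dotp (2 * m) a x).val| = 2 ^ m :=
  isBent_tau m a

/-- `τ_m` is a bent function on `(ZMod 2)^{2m}` for every `m ≥ 1`. -/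
theorem tau_isBent (m : ℕ) (hm : 1 ≤ m) (a : Fin (2 * m) → ZMod 2) :
    |∑ x : Fin (2 * m) → ZMod 2, (-1 : ℤ) ^ (tau m x + dotp (2 * m) a x).val| = 2 ^ m :=
  tau_isBent_general m a
end

section
/- The Cayley graph of σ_m on (ZMod 2)^{2m} (vertices x,y adjacent iff σ_m(x+y)=1) is a strongly regular graph with parameters v = 4^m, k = 2^{2m−1} − 2^{m−1}, λ = μ = 2^{2m−2} − 2^{m−1}. -/
/-- The Cayley graph of a Boolean function `f`: vertices `x ≠ y` adjacent iff `f (x + y) = 1`. -/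
def cayley (n : ℕ) (f : (Fin n → ZMod 2) → ZMod 2) : SimpleGraph (Fin n → ZMod 2) where
  Adj x y := x ≠ y ∧ f (x + y) = 1
  symm := by constructor; intro x y h; exact ⟨h.1.symm, by rw [add_comm]; exact h.2⟩
  loopless := by constructor; intro x h; exact h.1 rfl

instance (n : ℕ) (f : (Fin n → ZMod 2) → ZMod 2) : DecidableRel (cayley n f).Adj :=
  fun _ _ => instDecidableAnd

/-! Write `ψ a = (-1)^a` (`signChar`). Since `σ_m(x) = ∑ⱼ σ₁(x_{2j}, x_{2j+1})`, the character sums of `σ_m`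
factor over the `m` bit-pairs: `∑ₓ ψ(σ_m x) = 2^m` and, for `d ≠ 0`, the autocorrelation
`∑ₓ ψ(σ_m x) ψ(σ_m (x + d))` vanishes, because the corresponding sums for `σ₁` on `(ZMod 2)²`
are `2` and `4·[e = 0]`. Expanding `ψ a = 1 - 2·[a = 1]` turns these identities into the sizes of
the support of `σ_m` and of its intersection with a nonzero translate, which in the Cayley graph
are the degree and the number of common neighbours of two vertices `x ≠ y` (with `d = x + y`). -/

open Finset

lemma AddChar.map_sum_eq_prod {ι A M : Type*} [AddCommMonoid A] [CommMonoid M]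
    (ψ : AddChar A M) (s : Finset ι) (f : ι → A) : ψ (∑ i ∈ s, f i) = ∏ i ∈ s, ψ (f i) := by
  induction s using Finset.cons_induction with
  | empty => simp
  | cons i s _ ih => rw [sum_cons, map_add_eq_mul, ih, prod_cons]

def signChar : AddChar (ZMod 2) ℤ where
  toFun a := if a = 0 then 1 else -1
  map_zero_eq_one' := rfl
  map_add_eq_mul' := by decide

lemma signChar_eq (a : ZMod 2) : signChar a = 1 - 2 * if a = 1 then 1 else 0 := by
  revert a; decide

lemma signChar_mul_signChar (a b : ZMod 2) :
    signChar a * signChar b = 1 - 2 * (if a = 1 then 1 else 0) - 2 * (if b = 1 then 1 else 0)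
      + 4 * if a = 1 ∧ b = 1 then 1 else 0 := by
  revert a b; decide

section Counting

variable {G : Type*} [Fintype G]

lemma sum_signChar_eq (f : G → ZMod 2) :
    ∑ x, signChar (f x) = Fintype.card G - 2 * #{x | f x = 1} := by
  simp only [signChar_eq, sum_sub_distrib, ← mul_sum, sum_boole, sum_const, card_univ]
  simp

lemma sum_signChar_mul_signChar_add_eq [AddGroup G] (f : G → ZMod 2) (d : G) :
    ∑ x, signChar (f x) * signChar (f (x + d)) =
      Fintype.card G - 4 * #{x | f x = 1} + 4 * #{x | f x = 1 ∧ f (x + d) = 1} := by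
  have hshift : ∑ x, (if f (x + d) = 1 then (1 : ℤ) else 0) = ∑ x, if f x = 1 then 1 else 0 :=
    Equiv.sum_comp (Equiv.addRight d) fun x => if f x = 1 then (1 : ℤ) else 0
  simp only [signChar_mul_signChar, sum_add_distrib, sum_sub_distrib, ← mul_sum, hshift,
    sum_boole, sum_const, card_univ, Int.nsmul_eq_mul, mul_one]
  ring

end Counting

section Pi

variable {ι A : Type*} [Fintype ι] [DecidableEq ι] [Fintype A]

lemma sum_signChar_sum_apply (g : A → ZMod 2) :
    ∑ p : ι → A, signChar (∑ j, g (p j)) = (∑ a, signChar (g a)) ^ Fintype.card ι := by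
  rw [← card_univ, ← prod_const, Fintype.prod_sum]
  simp only [AddChar.map_sum_eq_prod]

lemma sum_signChar_sum_apply_mul_add [AddGroup A] (g : A → ZMod 2) (d : ι → A) :
    ∑ p : ι → A, signChar (∑ j, g (p j)) * signChar (∑ j, g (p j + d j)) =
      ∏ j, ∑ a, signChar (g a) * signChar (g (a + d j)) := by
  rw [Fintype.prod_sum]
  simp only [AddChar.map_sum_eq_prod, prod_mul_distrib]

end Pi

def pairEquiv (R : Type*) [Add R] (m : ℕ) : (Fin (2 * m) → R) ≃+ (Fin m → R × R) where
  toFun x j := (x ⟨2 * j, by omega⟩, x ⟨2 * j + 1, by omega⟩)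
  invFun q k := if k.1 % 2 = 0 then (q ⟨k / 2, by omega⟩).1 else (q ⟨k / 2, by omega⟩).2
  left_inv x := by
    funext k
    dsimp only
    split_ifs <;> congr 1 <;> ext <;> dsimp only <;> omega
  right_inv q := by
    funext j
    ext <;> simp [Nat.add_div]
  map_add' _ _ := rfl

def sigmaPair (a : ZMod 2 × ZMod 2) : ZMod 2 := if a.1 = 0 ∧ a.2 = 1 then 1 else 0

lemma sigma_eq_sum_sigmaPair (m : ℕ) (x : Fin (2 * m) → ZMod 2) :
    sigma m x = ∑ j, sigmaPair (pairEquiv (ZMod 2) m x j) := rfl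

lemma sum_signChar_sigma (m : ℕ) : ∑ x, signChar (sigma m x) = 2 ^ m := by
  have hpair : ∑ a, signChar (sigmaPair a) = 2 := by decide
  simp only [sigma_eq_sum_sigmaPair]
  rw [(pairEquiv (ZMod 2) m).bijective.sum_comp fun p => signChar (∑ j, sigmaPair (p j)),
    sum_signChar_sum_apply, hpair, Fintype.card_fin]

lemma sum_signChar_sigma_mul_add_eq_zero (m : ℕ) {d : Fin (2 * m) → ZMod 2} (hd : d ≠ 0) :
    ∑ x, signChar (sigma m x) * signChar (sigma m (x + d)) = 0 := by
  have hpair (e : ZMod 2 × ZMod 2) :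
      ∑ a, signChar (sigmaPair a) * signChar (sigmaPair (a + e)) = if e = 0 then 4 else 0 := by
    revert e; decide
  set e := pairEquiv (ZMod 2) m
  obtain ⟨j, hj⟩ : ∃ j, e d j ≠ 0 := Function.ne_iff.mp ((map_ne_zero_iff e e.injective).mpr hd)
  simp only [sigma_eq_sum_sigmaPair, map_add, Pi.add_apply]
  rw [e.bijective.sum_comp fun p => signChar (∑ j, sigmaPair (p j)) *
      signChar (∑ j, sigmaPair (p j + e d j)), sum_signChar_sum_apply_mul_add]
  exact prod_eq_zero (mem_univ j) (by rw [hpair, if_neg hj])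

lemma two_mul_card_sigma_eq_one_add (m : ℕ) : 2 * #{x | sigma m x = 1} + 2 ^ m = 4 ^ m := by
  have h := sum_signChar_eq (sigma m)
  rw [sum_signChar_sigma, Fintype.card_fun, ZMod.card, Fintype.card_fin, pow_mul] at h
  norm_num at h
  exact_mod_cast (by linarith : (2 * #{x | sigma m x = 1} + 2 ^ m : ℤ) = 4 ^ m)

lemma four_mul_card_sigma_eq_one_and_add_eq_one_add (m : ℕ) {d : Fin (2 * m) → ZMod 2}
    (hd : d ≠ 0) :
    4 * #{x | sigma m x = 1 ∧ sigma m (x + d) = 1} + 4 ^ m = 4 * #{x | sigma m x = 1} := by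
  have h := sum_signChar_mul_signChar_add_eq (sigma m) d
  rw [sum_signChar_sigma_mul_add_eq_zero m hd, Fintype.card_fun, ZMod.card, Fintype.card_fin,
    pow_mul] at h
  norm_num at h
  exact_mod_cast (by linarith : (4 * #{x | sigma m x = 1 ∧ sigma m (x + d) = 1} + 4 ^ m : ℤ) =
    4 * #{x | sigma m x = 1})

lemma card_sigma_eq_one (m : ℕ) : #{x | sigma m x = 1} = 2 ^ (2 * m - 1) - 2 ^ (m - 1) := by
  have h := two_mul_card_sigma_eq_one_add m
  cases m with
  | zero => simp at h ⊢; omega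
  | succ k =>
    simp only [show 2 * (k + 1) - 1 = 2 * k + 1 by omega, Nat.add_sub_cancel, pow_succ, pow_mul]
      at h ⊢
    norm_num at h ⊢
    omega

lemma card_sigma_eq_one_and_add_eq_one (m : ℕ) {d : Fin (2 * m) → ZMod 2} (hd : d ≠ 0) :
    #{x | sigma m x = 1 ∧ sigma m (x + d) = 1} = 2 ^ (2 * m - 2) - 2 ^ (m - 1) := by
  have h := four_mul_card_sigma_eq_one_and_add_eq_one_add m hd
  rw [card_sigma_eq_one] at h
  cases m with
  | zero => simp at h
  | succ k =>
    simp only [show 2 * (k + 1) - 1 = 2 * k + 1 by omega, show 2 * (k + 1) - 2 = 2 * k by omega,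
      Nat.add_sub_cancel, pow_succ, pow_mul] at h ⊢
    norm_num at h ⊢
    omega

section Cayley

variable {n : ℕ} {f : (Fin n → ZMod 2) → ZMod 2}

lemma cayley_adj_iff (hf : f 0 = 0) {x y : Fin n → ZMod 2} :
    (cayley n f).Adj x y ↔ f (x + y) = 1 :=
  ⟨And.right, fun h => ⟨fun hxy => by simp [hxy, ZModModule.add_self, hf] at h, h⟩⟩

lemma degree_cayley (hf : f 0 = 0) (x : Fin n → ZMod 2) :
    (cayley n f).degree x = #{w | f w = 1} := by
  rw [← SimpleGraph.card_neighborSet_eq_degree, ← Fintype.card_subtype]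
  refine (Fintype.card_congr ((Equiv.addLeft x).subtypeEquiv fun w => ?_)).symm
  simp only [SimpleGraph.mem_neighborSet, cayley_adj_iff hf, Equiv.coe_addLeft, ← add_assoc,
    ZModModule.add_self, zero_add]

lemma card_commonNeighbors_cayley (hf : f 0 = 0) (x y : Fin n → ZMod 2) :
    Fintype.card ((cayley n f).commonNeighbors x y) = #{w | f w = 1 ∧ f (w + (x + y)) = 1} := by
  rw [← Fintype.card_subtype]
  refine (Fintype.card_congr ((Equiv.addLeft x).subtypeEquiv fun z => ?_)).symm
  have hy : y + x + z = z + (x + y) := by abel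
  simp only [SimpleGraph.mem_commonNeighbors, cayley_adj_iff hf, Equiv.coe_addLeft, ← add_assoc,
    ZModModule.add_self, zero_add, hy]

end Cayley

lemma sigma_zero (m : ℕ) : sigma m 0 = 0 := by
  simp [sigma]

theorem cayley_sigma_isSRG_general (m : ℕ) :
    (cayley (2 * m) (sigma m)).IsSRGWith (4 ^ m) (2 ^ (2 * m - 1) - 2 ^ (m - 1))
      (2 ^ (2 * m - 2) - 2 ^ (m - 1)) (2 ^ (2 * m - 2) - 2 ^ (m - 1)) := by
  have hcommon {x y : Fin (2 * m) → ZMod 2} (h : x ≠ y) :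
      Fintype.card ((cayley (2 * m) (sigma m)).commonNeighbors x y) =
        2 ^ (2 * m - 2) - 2 ^ (m - 1) := by
    have hxy : x + y ≠ 0 := by rwa [← ZModModule.sub_eq_add, sub_ne_zero]
    rw [card_commonNeighbors_cayley (sigma_zero m), card_sigma_eq_one_and_add_eq_one m hxy]
  refine ⟨?_, fun x => ?_, fun x y h => hcommon h.ne, fun x y h _ => hcommon h⟩
  · simp [pow_mul]
  · rw [degree_cayley (sigma_zero m), card_sigma_eq_one]

/-- The Cayley graph of `σ_m` is strongly regular with parameters
`v = 4^m`, `k = 2^{2m-1} - 2^{m-1}`, `λ = μ = 2^{2m-2} - 2^{m-1}`. -/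
theorem cayley_sigma_isSRG (m : ℕ) (hm : 1 ≤ m) :
    (cayley (2 * m) (sigma m)).IsSRGWith (4 ^ m) (2 ^ (2 * m - 1) - 2 ^ (m - 1))
      (2 ^ (2 * m - 2) - 2 ^ (m - 1)) (2 ^ (2 * m - 2) - 2 ^ (m - 1)) :=
  cayley_sigma_isSRG_general m
end
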